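/- arXiv:2502.13854 — 8 statements merged into one kernel-verified Lean document; each statement's English description precedes it below -/
import Mathlib

section
/- Let r be a positive integer and let G be an r-forgetful simple graph containing at least one edge. Then the diameter of G is at least 2r+1; concretely, there exist vertices x and y of G such that y is reachable from x and dist(x, y) ≥ 2r + 1. -/
/-- A simple graph `G` is `r`-forgetful if it is bipartite (2-colorable) and for every
vertex `v` and every neighbor `u` of `v` there is a sequence `v_0 = v, v_1, …, v_r` of
successively adjacent vertices such that for every vertex `w` reachable from `u` with
`dist w u ≤ r` and `dist w u < dist w v`, the map `i ↦ dist (v_i) w` is strictly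
increasing on `{0, …, r}`. -/
def SimpleGraph.Forgetful {V : Type*} (G : SimpleGraph V) (r : ℕ) : Prop :=
  G.Colorable 2 ∧
  ∀ v u : V, G.Adj v u →
    ∃ seq : ℕ → V, seq 0 = v ∧ (∀ i, i < r → G.Adj (seq i) (seq (i + 1))) ∧
      ∀ w : V, G.Reachable u w → G.dist w u ≤ r → G.dist w u < G.dist w v →
        ∀ i j, i < j → j ≤ r → G.dist (seq i) w < G.dist (seq j) w

lemma chain_grow (f : ℕ → ℕ) (r : ℕ) (h : ∀ i j, i < j → j ≤ r → f i < f j) :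
    f 0 + r ≤ f r := by
  have : ∀ k, k ≤ r → f 0 + k ≤ f k := by
    intro k hk
    induction k with
    | zero => simp
    | succ n ih =>
      have h1 := ih (Nat.le_of_succ_le hk)
      have h2 := h n (n+1) (Nat.lt_succ_self n) hk
      omega
  exact this r le_rfl

lemma walk_along {V : Type*} (G : SimpleGraph V) (r : ℕ) (s : ℕ → V)
    (hsadj : ∀ i, i < r → G.Adj (s i) (s (i + 1))) :
    ∀ i, i ≤ r → ∃ p : G.Walk (s 0) (s i), p.length ≤ i := by
  intro i hi
  induction i with
  | zero => exact ⟨SimpleGraph.Walk.nil, by simp⟩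
  | succ n ih =>
    obtain ⟨p, hp⟩ := ih (Nat.le_of_succ_le hi)
    exact ⟨p.concat (hsadj n (by omega)), by simp [SimpleGraph.Walk.length_concat]; omega⟩

theorem forgetful_diameter {V : Type*} (G : SimpleGraph V) (r : ℕ) (hr : 0 < r)
    (hG : G.Forgetful r) (hedge : ∃ x y : V, G.Adj x y) :
    ∃ x y : V, G.Reachable x y ∧ 2 * r + 1 ≤ G.dist x y := by
  obtain ⟨x, y, hxy⟩ := hedge
  obtain ⟨-, hf⟩ := hG
  obtain ⟨s, hs0, hsadj, hsmono⟩ := hf x y hxy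
  subst hs0
  obtain ⟨p, hp⟩ := walk_along G r s hsadj r le_rfl
  have hxa : G.Reachable (s 0) (s r) := p.reachable
  have hdxa : G.dist (s 0) (s r) ≤ r := le_trans (SimpleGraph.dist_le p) hp
  -- apply monotone with w = y
  have hdyx : G.dist y (s 0) = 1 := SimpleGraph.dist_eq_one_iff_adj.mpr hxy.symm
  have hmono1 : ∀ i j, i < j → j ≤ r → G.dist (s i) y < G.dist (s j) y :=
    hsmono y (SimpleGraph.Reachable.refl y)
      (by rw [SimpleGraph.dist_self]; omega)
      (by rw [SimpleGraph.dist_self, hdyx]; omega)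
  have hday : r + 1 ≤ G.dist (s r) y := by
    have h1 := chain_grow (fun i => G.dist (s i) y) r hmono1
    have h0 : G.dist (s 0) y = 1 := SimpleGraph.dist_eq_one_iff_adj.mpr hxy
    simp only [h0] at h1
    exact by omega
  -- second sequence from y
  obtain ⟨t, ht0, htadj, htmono⟩ := hf y (s 0) hxy.symm
  subst ht0
  have hmono2 : ∀ i j, i < j → j ≤ r → G.dist (t i) (s r) < G.dist (t j) (s r) := by
    refine htmono (s r) hxa ?_ ?_
    · rwa [SimpleGraph.dist_comm]
    · rw [SimpleGraph.dist_comm (u := s r) (v := s 0)]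
      omega
  have hkey := chain_grow (fun i => G.dist (t i) (s r)) r hmono2
  have hc : G.dist (t 0) (s r) = G.dist (s r) (t 0) := SimpleGraph.dist_comm
  obtain ⟨q, hq⟩ := walk_along G r t htadj r le_rfl
  refine ⟨t r, s r, ?_, by omega⟩
  exact (q.reachable.symm.trans hxy.symm.reachable).trans hxa
end

section
/- Let r be a positive integer, let G be an r-forgetful simple graph, and let u and v be adjacent vertices of G. Then there exists a vertex w, reachable from u, such that dist(v, w) = r and dist(u, w) = r + 1. -/
theorem forgetful_escape {V : Type*} (G : SimpleGraph V) (r : ℕ) (hr : 0 < r)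
    (hG : G.Forgetful r) (u v : V) (huv : G.Adj u v) :
    ∃ w : V, G.Reachable u w ∧ G.dist v w = r ∧ G.dist u w = r + 1 := by
  obtain ⟨-, h⟩ := hG
  obtain ⟨seq, h0, hadj, hkey⟩ := h v u huv.symm
  have hdvu : G.dist v u = 1 := SimpleGraph.dist_eq_one_iff_adj.mpr huv.symm
  have hduv : G.dist u v = 1 := SimpleGraph.dist_eq_one_iff_adj.mpr huv
  have hmono := hkey u (SimpleGraph.Reachable.refl u)
    (by rw [SimpleGraph.dist_self]; omega) (by rw [SimpleGraph.dist_self, hduv]; omega)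
  have hlow : ∀ i, i ≤ r → i + 1 ≤ G.dist (seq i) u := by
    intro i
    induction i with
    | zero => intro _; simp [h0, hdvu]
    | succ n ih =>
      intro hi
      have h1 := hmono n (n + 1) (by omega) hi
      have h2 := ih (by omega)
      omega
  have hwalk : ∀ i, i ≤ r → ∃ p : G.Walk v (seq i), p.length = i := by
    intro i
    induction i with
    | zero => intro _; exact ⟨SimpleGraph.Walk.nil.copy rfl h0.symm, by simp⟩
    | succ n ih =>
      intro hi
      obtain ⟨p, hp⟩ := ih (by omega)
      exact ⟨p.concat (hadj n (by omega)), by simp [hp]⟩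
  obtain ⟨p, hp⟩ := hwalk r le_rfl
  have hreach : G.Reachable u (seq r) := ⟨SimpleGraph.Walk.cons huv p⟩
  have hdu_le : G.dist u (seq r) ≤ r + 1 := by
    have := G.dist_le (SimpleGraph.Walk.cons huv p)
    simp only [SimpleGraph.Walk.length_cons] at this
    omega
  have hdu_ge : r + 1 ≤ G.dist u (seq r) := by
    have := hlow r le_rfl
    rwa [SimpleGraph.dist_comm] at this
  have hdu : G.dist u (seq r) = r + 1 := le_antisymm hdu_le hdu_ge
  have hdv_le : G.dist v (seq r) ≤ r := by have := G.dist_le p; omega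
  have hdv_ge : r ≤ G.dist v (seq r) := by
    have hrv : G.Reachable v (seq r) := ⟨p⟩
    obtain ⟨q, hq⟩ := hrv.exists_walk_length_eq_dist
    have := G.dist_le (SimpleGraph.Walk.cons huv q)
    simp only [SimpleGraph.Walk.length_cons, hq] at this
    omega
  exact ⟨seq r, hreach, le_antisymm hdv_le hdv_ge, hdu⟩
end

section
/- Let r be a positive integer, let G be an r-forgetful simple graph, and let u and v be adjacent vertices of G. Then there exists a vertex w, reachable from u, such that dist(u, w) = 2r + 1. -/
lemma forgetful_aux {V : Type*} (G : SimpleGraph V) (r : ℕ) (u : V) (seq : ℕ → V)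
    (hadj : ∀ i, i < r → G.Adj (seq i) (seq (i + 1)))
    (hmono : ∀ i j, i < j → j ≤ r → G.dist (seq i) u < G.dist (seq j) u)
    (L : ℕ) (p0 : G.Walk u (seq 0)) (hl : p0.length = L) (h0 : G.dist (seq 0) u = L) :
    ∀ i, i ≤ r → (∃ p : G.Walk u (seq i), p.length = L + i) ∧ G.dist (seq i) u = L + i := by
  intro i
  induction i with
  | zero => intro _; exact ⟨⟨p0, by simp [hl]⟩, by simp [h0]⟩
  | succ i ih =>
    intro hir
    obtain ⟨⟨p, hp⟩, hd⟩ := ih (Nat.le_of_succ_le hir)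
    have hadj' := hadj i (Nat.lt_of_succ_le hir)
    refine ⟨⟨p.concat hadj', by simp [SimpleGraph.Walk.length_concat, hp, Nat.add_assoc]⟩, ?_⟩
    have hlt : G.dist (seq i) u < G.dist (seq (i+1)) u :=
      hmono i (i+1) (Nat.lt_succ_self i) hir
    have hub : G.dist (seq (i+1)) u ≤ L + (i+1) := by
      rw [SimpleGraph.dist_comm]
      calc G.dist u (seq (i+1)) ≤ (p.concat hadj').length := SimpleGraph.dist_le _
        _ = L + (i+1) := by simp [SimpleGraph.Walk.length_concat, hp, Nat.add_assoc]
    omega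

theorem forgetful_far_vertex {V : Type*} (G : SimpleGraph V) (r : ℕ) (hr : 0 < r)
    (hG : G.Forgetful r) (u v : V) (huv : G.Adj u v) :
    ∃ w : V, G.Reachable u w ∧ G.dist u w = 2 * r + 1 := by
  obtain ⟨-, hf⟩ := hG
  obtain ⟨seq, h0, hadj, hmono⟩ := hf v u huv.symm
  have hduv : G.dist u v = 1 := SimpleGraph.dist_eq_one_iff_adj.2 huv
  have hmono' : ∀ i j, i < j → j ≤ r → G.dist (seq i) u < G.dist (seq j) u := by
    intro i j hij hjr
    refine hmono u (SimpleGraph.Reachable.refl u) ?_ ?_ i j hij hjr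
    · rw [SimpleGraph.dist_self]; omega
    · rw [SimpleGraph.dist_self, hduv]; omega
  have key := forgetful_aux G r u seq hadj hmono' 1 (huv.toWalk.copy rfl h0.symm)
    (by simp) (by rw [h0, SimpleGraph.dist_comm]; exact hduv)
  have hr1 : r - 1 < r := by omega
  have hstep : G.Adj (seq (r-1)) (seq r) := by
    have h := hadj (r-1) hr1
    rwa [show r - 1 + 1 = r by omega] at h
  obtain ⟨seq2, h02, hadj2, hmono2⟩ := hf (seq r) (seq (r-1)) hstep.symm
  obtain ⟨⟨p1, hp1⟩, hd1⟩ := key (r-1) (by omega)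
  obtain ⟨⟨pr, hpr⟩, hdr⟩ := key r le_rfl
  have hreach : G.Reachable (seq (r-1)) u := (p1.reachable).symm
  have hmono2' : ∀ i j, i < j → j ≤ r → G.dist (seq2 i) u < G.dist (seq2 j) u := by
    intro i j hij hjr
    refine hmono2 u hreach ?_ ?_ i j hij hjr
    · rw [SimpleGraph.dist_comm]; omega
    · rw [SimpleGraph.dist_comm (u:=u) (v:=seq (r-1)), SimpleGraph.dist_comm (u:=u) (v:=seq r)]
      omega
  have key2 := forgetful_aux G r u seq2 hadj2 hmono2' (r+1) (pr.copy rfl h02.symm)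
    (by rw [SimpleGraph.Walk.length_copy]; omega) (by rw [h02]; omega)
  obtain ⟨⟨p2, hp2⟩, hd2⟩ := key2 r le_rfl
  exact ⟨seq2 r, p2.reachable, by rw [SimpleGraph.dist_comm]; omega⟩
end

section
/- Let G be a simple graph containing two cycles with distinct edge sets, i.e., there exist vertices a, b and closed walks c₁ : G.Walk a a and c₂ : G.Walk b b, each of which is a cycle, such that the edge set of c₁ differs from the edge set of c₂. Then for every edge e of G, the graph G' obtained from G by deleting the edge e still contains a cycle; equivalently, G.deleteEdges {e} is not acyclic. -/
/-! If `G - e` is acyclic, every cycle of `G` passes through `e = s(u, v)`, and removing `e` from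
it leaves a `v`–`u` path of `G - e`. Paths in a forest are unique, so any two cycles of `G`
have the same edge set. -/

namespace SimpleGraph

variable {V : Type*} {G : SimpleGraph V}

namespace Walk

theorem IsCycle.mem_edges_of_isAcyclic_deleteEdges {e : Sym2 V} {w : V} {c : G.Walk w w}
    (hc : c.IsCycle) (hac : (G.deleteEdges {e}).IsAcyclic) : e ∈ c.edges := by
  by_contra he
  exact hac (c.toDeleteEdge e he) (hc.toDeleteEdges G {e} _)

theorem IsPath.eq_of_isAcyclic_deleteEdges {e : Sym2 V} {v w : V} {p q : G.Walk v w}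
    (hp : p.IsPath) (hq : q.IsPath) (hac : (G.deleteEdges {e}).IsAcyclic)
    (hep : e ∉ p.edges) (heq : e ∉ q.edges) : p = q := by
  have h := congrArg Subtype.val <|
    (hac.subsingleton_path v w).elim ⟨p.toDeleteEdge e hep, hp.toDeleteEdges G {e} _⟩
      ⟨q.toDeleteEdge e heq, hq.toDeleteEdges G {e} _⟩
  simpa using congrArg (Walk.map (.ofLE (G.deleteEdges_le {e}))) h

theorem edges_eq_cons_tail {u v : V} {p : G.Walk u v} (hp : ¬ p.Nil) :
    p.edges = s(u, p.snd) :: p.tail.edges := by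
  conv_lhs => rw [← p.cons_tail_eq hp]
  rfl

theorem IsCycle.mem_edges_iff_eq_snd_or_eq_penultimate {u v : V} {c : G.Walk u u}
    (hc : c.IsCycle) : s(u, v) ∈ c.edges ↔ v = c.snd ∨ v = c.penultimate := by
  rw [← adj_toSubgraph_iff_mem_edges, ← Subgraph.mem_neighborSet,
    hc.neighborSet_toSubgraph_endpoint]
  rfl

theorem IsCycle.exists_isPath_edges_perm_of_start {u v : V} {c : G.Walk u u} (hc : c.IsCycle)
    (he : s(u, v) ∈ c.edges) : ∃ p : G.Walk v u, p.IsPath ∧ c.edges.Perm (s(u, v) :: p.edges) := by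
  rcases hc.mem_edges_iff_eq_snd_or_eq_penultimate.1 he with rfl | rfl
  · exact ⟨c.tail, hc.isPath_tail, .of_eq (edges_eq_cons_tail hc.not_nil)⟩
  · have hc' := hc.reverse
    refine ⟨c.reverse.tail.copy c.snd_reverse rfl, by simpa using hc'.isPath_tail, ?_⟩
    rw [edges_copy, ← c.snd_reverse, ← edges_eq_cons_tail hc'.not_nil, edges_reverse]
    exact (List.reverse_perm _).symm

theorem IsCycle.exists_isPath_edges_perm {w u v : V} {c : G.Walk w w} (hc : c.IsCycle)
    (he : s(u, v) ∈ c.edges) : ∃ p : G.Walk v u, p.IsPath ∧ c.edges.Perm (s(u, v) :: p.edges) := by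
  classical
  have hu := c.fst_mem_support_of_mem_edges he
  have hrot := (c.rotate_edges u hu).perm
  obtain ⟨p, hp, hperm⟩ := (hc.rotate hu).exists_isPath_edges_perm_of_start (hrot.mem_iff.2 he)
  exact ⟨p, hp, hrot.symm.trans hperm⟩

end Walk

end SimpleGraph

theorem deleteEdge_not_acyclic_of_two_cycles {V : Type*} (G : SimpleGraph V)
    (htwo : ∃ (a b : V) (c₁ : G.Walk a a) (c₂ : G.Walk b b),
      c₁.IsCycle ∧ c₂.IsCycle ∧ {e | e ∈ c₁.edges} ≠ {e | e ∈ c₂.edges}) :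
    ∀ e ∈ G.edgeSet, ¬ (G.deleteEdges {e}).IsAcyclic := by
  obtain ⟨a, b, c₁, c₂, hc₁, hc₂, hne⟩ := htwo
  rintro ⟨u, v⟩ - hac
  obtain ⟨p₁, hp₁, hperm₁⟩ :=
    hc₁.exists_isPath_edges_perm (hc₁.mem_edges_of_isAcyclic_deleteEdges hac)
  obtain ⟨p₂, hp₂, hperm₂⟩ :=
    hc₂.exists_isPath_edges_perm (hc₂.mem_edges_of_isAcyclic_deleteEdges hac)
  have hnotMem {w : V} {c : G.Walk w w} {p : G.Walk v u} (hc : c.IsCycle)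
      (hperm : c.edges.Perm (s(u, v) :: p.edges)) : s(u, v) ∉ p.edges :=
    (List.nodup_cons.1 (hperm.nodup_iff.1 hc.edges_nodup)).1
  have hp : p₁ = p₂ :=
    hp₁.eq_of_isAcyclic_deleteEdges hp₂ hac (hnotMem hc₁ hperm₁) (hnotMem hc₂ hperm₂)
  apply hne
  ext f
  simp only [Set.mem_ofPred_eq, hperm₁.mem_iff, hperm₂.mem_iff, hp]
end

section
/- Let G be a finite connected simple graph with minimum degree at least 2 that contains two cycles with distinct edge sets (there exist closed walks c₁ and c₂ in G, each a cycle, whose edge sets differ). Let e = {x, y} be any edge of G and let G' = G.deleteEdges {e}. Then G' contains a cycle all of whose vertices are reachable from y in G'; that is, there is a vertex a reachable from y in G' and a closed walk c : G'.Walk a a with c.IsCycle. -/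
/-!
If `s(x, y)` is not a bridge, `G - s(x, y)` is connected, and it contains a cycle because two
cycles with distinct edge sets survive the deletion of any edge: pick an edge `f` of the first
cycle that the second avoids; if the second cycle uses `s(x, y)`, it reconnects `x` and `y` in
`G - f - s(x, y)`, and then the first cycle reconnects the endpoints of `f`, closing a cycle
through `f` in `G - s(x, y)`.

If `s(x, y)` is a bridge, the component of `y` in `G - s(x, y)` misses `x`, so each of its
vertices other than `y` keeps its degree `≥ 2`. Hence the far end of a longest path from `y` has
a neighbour on the path other than its predecessor, which closes a cycle.
-/

namespace SimpleGraph

variable {V : Type*} {G : SimpleGraph V}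

lemma exists_adj_ne_of_two_le_degree {v : V} [Fintype (G.neighborSet v)] (h : 2 ≤ G.degree v)
    (u : V) : ∃ w ≠ u, G.Adj v w := by
  obtain ⟨w, hw, hwu⟩ := Finset.exists_mem_ne (s := G.neighborFinset v)
    (by rw [card_neighborFinset_eq_degree]; omega) u
  exact ⟨w, hwu, (mem_neighborFinset G v w).1 hw⟩

lemma reachable_deleteEdges_of_reachable {x y a b : V}
    (hxy : (G.deleteEdges {s(x, y)}).Reachable x y) (hab : G.Reachable a b) :
    (G.deleteEdges {s(x, y)}).Reachable a b := by
  have hadj : ∀ {u v : V}, G.Adj u v → (G.deleteEdges {s(x, y)}).Reachable u v := by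
    intro u v huv
    by_cases h : s(u, v) = s(x, y)
    · rcases Sym2.eq_iff.1 h with ⟨rfl, rfl⟩ | ⟨rfl, rfl⟩
      exacts [hxy, hxy.symm]
    · exact Adj.reachable (by simp [huv, h])
  obtain ⟨p⟩ := hab
  induction p with
  | nil => rfl
  | cons h _ ih => exact (hadj h).trans ih

theorem exists_isCycle_deleteEdges_of_mem_edges_of_notMem_edges {u v : V} {c₁ : G.Walk u u}
    {c₂ : G.Walk v v} (hc₁ : c₁.IsCycle) (hc₂ : c₂.IsCycle) {f : Sym2 V} (hf₁ : f ∈ c₁.edges)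
    (hf₂ : f ∉ c₂.edges) (e : Sym2 V) :
    ∃ (a : V) (c : (G.deleteEdges {e}).Walk a a), c.IsCycle := by
  by_cases he : e ∈ c₂.edges
  swap
  · refine ⟨v, c₂.toDeleteEdges {e} fun _ hg hge => he (hge ▸ hg), ?_⟩
    exact Walk.IsCycle.toDeleteEdges _ _ hc₂ _
  induction e with | h x y => ?_
  induction f with | h a b => ?_
  have hfe : s(a, b) ≠ s(x, y) := fun h => hf₂ (h ▸ he)
  let c₂' := c₂.toDeleteEdges {s(a, b)} fun _ hg hgf => hf₂ (hgf ▸ hg)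
  have hxy : ((G.deleteEdges {s(a, b)}).deleteEdges {s(x, y)}).Reachable x y :=
    (adj_and_reachable_delete_edges_iff_exists_cycle.2
      ⟨v, c₂', Walk.IsCycle.toDeleteEdges _ _ hc₂ _, by simpa [c₂']⟩).2
  have hab : (G.deleteEdges {s(a, b)}).Reachable a b :=
    (adj_and_reachable_delete_edges_iff_exists_cycle.2 ⟨u, c₁, hc₁, hf₁⟩).2
  have hab' := reachable_deleteEdges_of_reachable hxy hab
  rw [deleteEdges_deleteEdges, Set.union_comm, ← deleteEdges_deleteEdges] at hab'
  obtain ⟨a, c, hc, -⟩ := adj_and_reachable_delete_edges_iff_exists_cycle.1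
    ⟨by simp [c₁.adj_of_mem_edges hf₁, hfe], hab'⟩
  exact ⟨a, c, hc⟩

theorem exists_isCycle_deleteEdges_of_isCycle_of_edges_ne {u v : V} {c₁ : G.Walk u u}
    {c₂ : G.Walk v v} (hc₁ : c₁.IsCycle) (hc₂ : c₂.IsCycle)
    (hne : {e | e ∈ c₁.edges} ≠ {e | e ∈ c₂.edges}) (e : Sym2 V) :
    ∃ (a : V) (c : (G.deleteEdges {e}).Walk a a), c.IsCycle := by
  obtain ⟨f, hf⟩ : ∃ f, ¬(f ∈ c₁.edges ↔ f ∈ c₂.edges) := by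
    by_contra! h
    exact hne (Set.ext h)
  by_cases hf₁ : f ∈ c₁.edges
  · exact exists_isCycle_deleteEdges_of_mem_edges_of_notMem_edges hc₁ hc₂ hf₁ (by tauto) e
  · exact exists_isCycle_deleteEdges_of_mem_edges_of_notMem_edges hc₂ hc₁ (by tauto) hf₁ e

lemma exists_isPath_forall_isPath_length_le_length_from [Finite V] (G : SimpleGraph V) (y : V) :
    ∃ (v : V) (p : G.Walk y v), p.IsPath ∧
      ∀ (w : V) (q : G.Walk y w), q.IsPath → q.length ≤ p.length := by
  classical
  have := Fintype.ofFinite V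
  have : Nonempty (Σ v, G.Path y v) := ⟨⟨y, Path.nil⟩⟩
  obtain ⟨⟨v, p⟩, hp⟩ := Finite.exists_max fun p : Σ v, G.Path y v => p.2.1.length
  exact ⟨v, p, p.2, fun w q hq => hp ⟨w, q, hq⟩⟩

theorem Walk.IsPath.exists_isCycle_of_adj_of_ne_penultimate {u v w : V} {p : G.Walk u v}
    (hp : p.IsPath) (hw : w ∈ p.support) (hadj : G.Adj v w) (hne : w ≠ p.penultimate) :
    ∃ c : G.Walk v v, c.IsCycle := by
  classical
  refine ⟨.cons hadj (p.dropUntil w hw), (Walk.cons_isCycle_iff _ _).2 ⟨hp.dropUntil hw, ?_⟩⟩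
  exact fun he => hne (hp.eq_penultimate_of_mem_edges (p.edges_dropUntil_subset_edges hw he))

theorem exists_isCycle_reachable_of_forall_exists_adj_ne [Finite V] {y : V}
    (hy : ∃ z, G.Adj y z) (h : ∀ v, G.Reachable y v → v ≠ y → ∀ u, ∃ w ≠ u, G.Adj v w) :
    ∃ a, G.Reachable y a ∧ ∃ c : G.Walk a a, c.IsCycle := by
  obtain ⟨v, p, hp, hmax⟩ := G.exists_isPath_forall_isPath_length_le_length_from y
  obtain ⟨z, hyz⟩ := hy
  have hvy : v ≠ y := by
    rintro rfl
    have := hmax z (Adj.toWalk hyz) (Adj.isPath_toWalk hyz)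
    simp [(Walk.isPath_iff_nil.1 hp).eq_nil] at this
  obtain ⟨w, hw, hvw⟩ := h v p.reachable hvy p.penultimate
  have hwp : w ∈ p.support := by
    by_contra hwp
    have := hmax w (p.concat hvw) (hp.concat hwp hvw)
    simp at this
  exact ⟨v, p.reachable, hp.exists_isCycle_of_adj_of_ne_penultimate hwp hvw hw⟩

end SimpleGraph

open SimpleGraph

theorem cycle_reachable_after_deleteEdge_general {V : Type*} [Fintype V] (G : SimpleGraph V)
    [DecidableRel G.Adj] (hconn : G.Connected)
    (hdeg : ∀ v : V, 2 ≤ G.degree v)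
    (htwo : ∃ (a b : V) (c₁ : G.Walk a a) (c₂ : G.Walk b b),
      c₁.IsCycle ∧ c₂.IsCycle ∧ {e | e ∈ c₁.edges} ≠ {e | e ∈ c₂.edges})
    (x y : V) :
    ∃ a : V, (G.deleteEdges {s(x, y)}).Reachable y a ∧
      ∃ c : (G.deleteEdges {s(x, y)}).Walk a a, c.IsCycle := by
  by_cases hxy : (G.deleteEdges {s(x, y)}).Reachable x y
  · have hnot : ¬G.IsBridge s(x, y) := by rwa [isBridge_iff, not_not]
    have hconn' := hconn.connected_delete_edge_of_not_isBridge hnot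
    obtain ⟨_, _, c₁, c₂, hc₁, hc₂, hne⟩ := htwo
    obtain ⟨a, c, hc⟩ := exists_isCycle_deleteEdges_of_isCycle_of_edges_ne hc₁ hc₂ hne s(x, y)
    exact ⟨a, hconn' y a, c, hc⟩
  · refine exists_isCycle_reachable_of_forall_exists_adj_ne ?_ fun v hv hvy u => ?_
    · obtain ⟨z, hzx, hyz⟩ := exists_adj_ne_of_two_le_degree (hdeg y) x
      exact ⟨z, by grind [deleteEdges_adj, Sym2.eq_iff]⟩
    · have hvx : v ≠ x := by
        rintro rfl
        exact hxy hv.symm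
      obtain ⟨w, hwu, hvw⟩ := exists_adj_ne_of_two_le_degree (hdeg v) u
      exact ⟨w, hwu, by simp [hvw, hvx, hvy]⟩

theorem cycle_reachable_after_deleteEdge {V : Type*} [Fintype V] (G : SimpleGraph V)
    [DecidableRel G.Adj] (hconn : G.Connected)
    (hdeg : ∀ v : V, 2 ≤ G.degree v)
    (htwo : ∃ (a b : V) (c₁ : G.Walk a a) (c₂ : G.Walk b b),
      c₁.IsCycle ∧ c₂.IsCycle ∧ {e | e ∈ c₁.edges} ≠ {e | e ∈ c₂.edges})
    (x y : V) (hxy : G.Adj x y) :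
    ∃ a : V, (G.deleteEdges {s(x, y)}).Reachable y a ∧
      ∃ c : (G.deleteEdges {s(x, y)}).Walk a a, c.IsCycle :=
  cycle_reachable_after_deleteEdge_general G hconn hdeg htwo x y
end

section
/- Let G be a finite simple graph and let v be a vertex of G. Then G is 2-colorable if and only if the following three conditions hold: (1) no two neighbors of v are adjacent in G (the neighborhood N(v) is an independent set); (2) the subgraph of G induced on the complement of the closed neighborhood N[v] is 2-colorable; and (3) for every connected component C of the induced subgraph of G on the complement of N[v], there exists a proper 2-coloring c : C → Fin 2 of the induced subgraph on C such that all vertices of C that have at least one neighbor (in G) belonging to N(v) receive the same color under c. -/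
private lemma fin2_aux : ∀ a b c : Fin 2, a ≠ b → a ≠ c → b = c := by decide

private lemma fin2_aux2 : ∀ a b r : Fin 2, a ≠ b →
    (if a = r then (0 : Fin 2) else 1) ≠ (if b = r then 0 else 1) := by decide

theorem bipartite_iff_shatter_conditions {V : Type*} [Fintype V]
    (G : SimpleGraph V) (v : V) :
    G.Colorable 2 ↔
      ((∀ x y : V, G.Adj v x → G.Adj v y → ¬ G.Adj x y) ∧
       (G.induce ((insert v (G.neighborSet v))ᶜ)).Colorable 2 ∧
       (∀ C : (G.induce ((insert v (G.neighborSet v))ᶜ)).ConnectedComponent,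
         ∃ c : ((insert v (G.neighborSet v))ᶜ : Set V) → Fin 2,
           (∀ x y : ((insert v (G.neighborSet v))ᶜ : Set V),
             (G.induce ((insert v (G.neighborSet v))ᶜ)).connectedComponentMk x = C →
             (G.induce ((insert v (G.neighborSet v))ᶜ)).Adj x y → c x ≠ c y) ∧
           (∀ x y : ((insert v (G.neighborSet v))ᶜ : Set V),
             (G.induce ((insert v (G.neighborSet v))ᶜ)).connectedComponentMk x = C →
             (G.induce ((insert v (G.neighborSet v))ᶜ)).connectedComponentMk y = C →
             (∃ z ∈ G.neighborSet v, G.Adj z x.val) →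
             (∃ z ∈ G.neighborSet v, G.Adj z y.val) →
             c x = c y))) := by
  classical
  set S : Set V := (insert v (G.neighborSet v))ᶜ with hS
  constructor
  · rintro ⟨c⟩
    refine ⟨?_, ?_, ?_⟩
    · intro x y hvx hvy hxy
      exact c.valid hxy (fin2_aux (c v) (c x) (c y) (c.valid hvx) (c.valid hvy))
    · exact ⟨SimpleGraph.Coloring.mk (fun u => c u.1)
        (fun {a b} hab => c.valid ((SimpleGraph.comap_adj).1 hab))⟩
    · intro C
      refine ⟨fun u => c u.1, ?_, ?_⟩
      · intro x y _ hxy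
        exact c.valid ((SimpleGraph.comap_adj).1 hxy)
      · rintro x y _ _ ⟨z, hz, hzx⟩ ⟨w, hw, hwy⟩
        have hx : c x.1 = c v := (fin2_aux (c z) (c v) (c x.1)
          (fun h => c.valid hz h.symm) (c.valid hzx)).symm
        have hy : c y.1 = c v := (fin2_aux (c w) (c v) (c y.1)
          (fun h => c.valid hw h.symm) (c.valid hwy)).symm
        exact hx.trans hy.symm
  · rintro ⟨h1, _, h3⟩
    -- chosen coloring for each component
    let cc : (G.induce S).ConnectedComponent → (S → Fin 2) := fun C => (h3 C).choose
    have ccprop := fun C => (h3 C).choose_spec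
    let B : S → Prop := fun u => ∃ z ∈ G.neighborSet v, G.Adj z u.1
    let ref : (G.induce S).ConnectedComponent → Fin 2 := fun C =>
      if h : ∃ w : S, (G.induce S).connectedComponentMk w = C ∧ B w then
        cc C h.choose else 0
    let g : S → Fin 2 := fun u =>
      if cc ((G.induce S).connectedComponentMk u) u
          = ref ((G.induce S).connectedComponentMk u) then 0 else 1
    -- key fact: boundary vertices get color 0
    have hg0 : ∀ u : S, B u → g u = 0 := by
      intro u hu
      have hex : ∃ w : S, (G.induce S).connectedComponentMk w
          = (G.induce S).connectedComponentMk u ∧ B w := ⟨u, rfl, hu⟩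
      have hrefval : ref ((G.induce S).connectedComponentMk u)
          = cc ((G.induce S).connectedComponentMk u) hex.choose := by
        simp only [ref, dif_pos hex]
      have hc : cc ((G.induce S).connectedComponentMk u) u
          = cc ((G.induce S).connectedComponentMk u) hex.choose := by
        exact (ccprop _).2 u hex.choose rfl hex.choose_spec.1 hu hex.choose_spec.2
      simp only [g, hrefval, if_pos hc]
    -- properness of g
    have hgadj : ∀ u w : S, (G.induce S).Adj u w → g u ≠ g w := by
      intro u w huw
      have hcomp : (G.induce S).connectedComponentMk u
          = (G.induce S).connectedComponentMk w :=
        SimpleGraph.ConnectedComponent.sound huw.reachable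
      have hne : cc ((G.induce S).connectedComponentMk u) u
          ≠ cc ((G.induce S).connectedComponentMk u) w :=
        (ccprop _).1 u w rfl huw
      simp only [g, ← hcomp]
      exact fin2_aux2 _ _ _ hne
    -- full coloring
    let f : V → Fin 2 := fun u => if hu : u ∈ S then g ⟨u, hu⟩ else if u = v then 0 else 1
    have hmem : ∀ u : V, u ∉ S ↔ u = v ∨ G.Adj v u := by
      intro u
      rw [hS]
      simp only [Set.notMem_compl_iff, Set.mem_insert_iff, SimpleGraph.mem_neighborSet]
    have hvS : v ∉ S := (hmem v).2 (Or.inl rfl)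
    refine ⟨SimpleGraph.Coloring.mk f ?_⟩
    intro a b hab
    by_cases ha : a ∈ S <;> by_cases hb : b ∈ S
    · simpa [f, ha, hb] using hgadj ⟨a, ha⟩ ⟨b, hb⟩ (by simpa using hab)
    · rcases (hmem b).1 hb with hbe | hbv
      · exact absurd (((hmem a).2 (Or.inr (hbe ▸ hab.symm))) ha) id
      · have hbne : b ≠ v := fun h => G.irrefl (h ▸ hbv)
        have hBa : B ⟨a, ha⟩ := ⟨b, hbv, hab.symm⟩
        simp [f, ha, hb, hbne, hg0 ⟨a, ha⟩ hBa]
    · rcases (hmem a).1 ha with hae | hav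
      · exact absurd (((hmem b).2 (Or.inr (hae ▸ hab))) hb) id
      · have hane : a ≠ v := fun h => G.irrefl (h ▸ hav)
        have hBb : B ⟨b, hb⟩ := ⟨a, hav, hab⟩
        simp [f, ha, hb, hane, hg0 ⟨b, hb⟩ hBb]
    · rcases (hmem a).1 ha with hae | hav
      · rcases (hmem b).1 hb with hbe | hbv
        · rw [hae, hbe] at hab
          exact absurd hab G.irrefl
        · have hbne : b ≠ v := fun h => G.irrefl (h ▸ hbv)
          simp [f, ha, hb, hae, hbne, hvS]
      · rcases (hmem b).1 hb with hbe | hbv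
        · have hane : a ≠ v := fun h => G.irrefl (h ▸ hav)
          simp [f, ha, hb, hbe, hane, hvS]
        · exact absurd hab (h1 a b hav hbv)
end

section
/- Let (G, v₁, v₂, p₁, …, p_k) be a watermelon graph with G finite. Then G is 2-colorable if and only if all the path lengths have the same parity, i.e., for all indices i and j, length(p_i) ≡ length(p_j) (mod 2). -/
/-!
In a 2-colouring, the colour changes along every edge, so two walks with the same ends have
lengths of the same parity. Conversely, colour each vertex by the parity of its position on a
path through it. The paths meet only at `v₁` (position `0`) and `v₂` (position the length of the
path), so equal length parities make this well defined, and it is proper because every edge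
joins consecutive vertices of some path.
-/

open SimpleGraph Walk

namespace SimpleGraph

variable {V : Type*} {G : SimpleGraph V} {u v : V}

lemma Colorable.length_mod_two_eq (hG : G.Colorable 2) (p q : G.Walk u v) :
    p.length % 2 = q.length % 2 := by
  have hloop := two_colorable_iff_forall_loop_even.mp hG u (p.append q.reverse)
  rw [length_append, length_reverse, Nat.even_iff] at hloop
  omega

namespace Walk

variable {p : G.Walk u v}

lemma idxOf_support_start [DecidableEq V] (p : G.Walk u v) : p.support.idxOf u = 0 := by
  rw [← cons_tail_support, List.idxOf_cons_self]

lemma IsPath.idxOf_support_getVert [DecidableEq V] (hp : p.IsPath) {n : ℕ} (hn : n ≤ p.length) :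
    p.support.idxOf (p.getVert n) = n := by
  rw [getVert_eq_support_getElem p hn, hp.support_nodup.idxOf_getElem]

lemma IsPath.idxOf_support_end [DecidableEq V] (hp : p.IsPath) :
    p.support.idxOf v = p.length := by
  simpa using hp.idxOf_support_getVert le_rfl

lemma exists_getVert_of_mem_edges {x y : V} (he : s(x, y) ∈ p.edges) :
    ∃ n < p.length, p.getVert n = x ∧ p.getVert (n + 1) = y ∨
      p.getVert n = y ∧ p.getVert (n + 1) = x := by
  obtain ⟨n, hn, hen⟩ := List.mem_iff_getElem.mp he
  rw [getElem_edges, Sym2.eq_iff] at hen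
  exact ⟨n, by simpa using hn, hen⟩

lemma IsPath.idxOf_mod_two_ne_of_mem_edges [DecidableEq V] (hp : p.IsPath) {x y : V}
    (he : s(x, y) ∈ p.edges) : p.support.idxOf x % 2 ≠ p.support.idxOf y % 2 := by
  obtain ⟨n, hn, ⟨rfl, rfl⟩ | ⟨rfl, rfl⟩⟩ := exists_getVert_of_mem_edges he <;>
  · rw [hp.idxOf_support_getVert hn.le, hp.idxOf_support_getVert hn]
    omega

end Walk

end SimpleGraph

/-- A watermelon graph: a simple graph `G` together with two distinct vertices `v₁, v₂`
and a nonempty family of pairwise internally disjoint paths `p i` of length at least 2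
from `v₁` to `v₂` that cover all vertices and all edges of `G`. -/
structure SimpleGraph.IsWatermelon {V : Type*} (G : SimpleGraph V) (v₁ v₂ : V) {k : ℕ}
    (p : Fin k → G.Walk v₁ v₂) : Prop where
  ne : v₁ ≠ v₂
  nonempty : 0 < k
  isPath : ∀ i, (p i).IsPath
  two_le_length : ∀ i, 2 ≤ (p i).length
  support_inter : ∀ i j, i ≠ j →
    {x | x ∈ (p i).support} ∩ {x | x ∈ (p j).support} = {v₁, v₂}
  support_cover : ∀ x : V, ∃ i, x ∈ (p i).support
  edge_cover : ∀ e ∈ G.edgeSet, ∃ i, e ∈ (p i).edges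

namespace SimpleGraph.IsWatermelon

variable {V : Type*} {G : SimpleGraph V} {v₁ v₂ : V} {k : ℕ} {p : Fin k → G.Walk v₁ v₂}

lemma eq_or_eq_of_mem_support (hW : G.IsWatermelon v₁ v₂ p) {i j : Fin k} (hij : i ≠ j)
    {x : V} (hi : x ∈ (p i).support) (hj : x ∈ (p j).support) : x = v₁ ∨ x = v₂ := by
  have hx : x ∈ ({v₁, v₂} : Set V) := hW.support_inter i j hij ▸ ⟨hi, hj⟩
  exact hx

variable [DecidableEq V]

lemma idxOf_mod_two_eq (hW : G.IsWatermelon v₁ v₂ p)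
    (hpar : ∀ i j, (p i).length % 2 = (p j).length % 2) {x : V} {i j : Fin k}
    (hi : x ∈ (p i).support) (hj : x ∈ (p j).support) :
    (p i).support.idxOf x % 2 = (p j).support.idxOf x % 2 := by
  obtain rfl | hij := eq_or_ne i j
  · rfl
  obtain rfl | rfl := hW.eq_or_eq_of_mem_support hij hi hj
  · rw [idxOf_support_start, idxOf_support_start]
  · rw [(hW.isPath i).idxOf_support_end, (hW.isPath j).idxOf_support_end]
    exact hpar i j

noncomputable def parityColoring (hW : G.IsWatermelon v₁ v₂ p)
    (hpar : ∀ i j, (p i).length % 2 = (p j).length % 2) : G.Coloring (Fin 2) :=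
  Coloring.mk
    (fun x ↦ ⟨(p (hW.support_cover x).choose).support.idxOf x % 2, Nat.mod_lt _ two_pos⟩)
    fun {x y} hxy ↦ by
      obtain ⟨i, he⟩ := hW.edge_cover s(x, y) hxy
      rw [ne_eq, Fin.mk.injEq,
        hW.idxOf_mod_two_eq hpar (hW.support_cover x).choose_spec
          (fst_mem_support_of_mem_edges _ he),
        hW.idxOf_mod_two_eq hpar (hW.support_cover y).choose_spec
          (snd_mem_support_of_mem_edges _ he)]
      exact (hW.isPath i).idxOf_mod_two_ne_of_mem_edges he

end SimpleGraph.IsWatermelon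

theorem watermelon_colorable_iff_same_parity_general {V : Type*}
    (G : SimpleGraph V) (v₁ v₂ : V) {k : ℕ} (p : Fin k → G.Walk v₁ v₂)
    (hW : G.IsWatermelon v₁ v₂ p) :
    G.Colorable 2 ↔ ∀ i j, (p i).length % 2 = (p j).length % 2 := by
  classical
  exact ⟨fun hG i j ↦ hG.length_mod_two_eq (p i) (p j), fun hpar ↦ ⟨hW.parityColoring hpar⟩⟩

theorem watermelon_colorable_iff_same_parity {V : Type*} [Fintype V]
    (G : SimpleGraph V) (v₁ v₂ : V) {k : ℕ} (p : Fin k → G.Walk v₁ v₂)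
    (hW : G.IsWatermelon v₁ v₂ p) :
    G.Colorable 2 ↔ ∀ i j, (p i).length % 2 = (p j).length % 2 :=
  watermelon_colorable_iff_same_parity_general G v₁ v₂ p hW
end

section
/- Let (G, v₁, v₂, p₁, …, p_k) be a watermelon graph. Then every cycle of G is formed by exactly two of the paths: for every vertex a and every closed walk c : G.Walk a a with c.IsCycle, there exist indices i ≠ j such that the edge set of c equals the union of the edge set of p_i and the edge set of p_j. -/
/-!
Every inner vertex of a path `p i` has degree two in `G`: an edge at it lies on some `p j`, and
the supports of `p i` and `p j` meet only in `v₁, v₂` unless `i = j`. A cycle leaves each of its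
vertices along two distinct edges, so a cycle through such a vertex uses both edges there, and
walking along `p i` shows that a cycle containing one edge of `p i` contains all of them. Distinct
paths share no edge, so a cycle is a union of whole paths; it has exactly two edges at `v₁`, and
every path exactly one, so it is the union of exactly two paths.
-/

namespace SimpleGraph

variable {V : Type*} {G : SimpleGraph V}

namespace Walk

lemma IsCycle.neighborSet_toSubgraph_eq_of_encard_le_two {a x : V} {c : G.Walk a a}
    (hc : c.IsCycle) (hx : x ∈ c.support) (hdeg : (G.neighborSet x).encard ≤ 2) :
    c.toSubgraph.neighborSet x = G.neighborSet x := by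
  refine (c.finite_neighborSet_toSubgraph).eq_of_subset_of_encard_le
    (c.toSubgraph.neighborSet_subset x) ?_
  rwa [← (c.finite_neighborSet_toSubgraph).cast_ncard_eq,
    hc.ncard_neighborSet_toSubgraph_eq_two hx]

lemma IsPath.ncard_neighborSet_toSubgraph_eq_two {u w x : V} {q : G.Walk u w}
    (hq : q.IsPath) (hx : x ∈ q.support) (hxu : x ≠ u) (hxw : x ≠ w) :
    (q.toSubgraph.neighborSet x).ncard = 2 := by
  obtain ⟨n, rfl, hn⟩ := mem_support_iff_exists_getVert.mp hx
  refine hq.ncard_neighborSet_toSubgraph_internal_eq_two ?_ ?_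
  · rintro rfl
    exact hxu q.getVert_zero
  · refine hn.lt_of_ne ?_
    rintro rfl
    exact hxw q.getVert_length

lemma IsPath.forall_mem_edges_of_mem {S : Set (Sym2 V)} {u w : V} {q : G.Walk u w}
    (hq : q.IsPath)
    (hS : ∀ x ∈ q.support, x ≠ u → x ≠ w →
      ∀ e ∈ q.edges, ∀ f ∈ q.edges, x ∈ e → x ∈ f → e ∈ S → f ∈ S)
    {e : Sym2 V} (he : e ∈ q.edges) (heS : e ∈ S) : ∀ f ∈ q.edges, f ∈ S := by
  induction q generalizing e with
  | nil => simp at he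
  | @cons u b w h q ih =>
    rw [cons_isPath_iff] at hq
    have hS' : ∀ x ∈ q.support, x ≠ b → x ≠ w →
        ∀ e ∈ q.edges, ∀ f ∈ q.edges, x ∈ e → x ∈ f → e ∈ S → f ∈ S :=
      fun x hx _ hxw e he f hf ↦ hS x (by simp [hx]) (by rintro rfl; exact hq.2 hx) hxw
        e (by simp [he]) f (by simp [hf])
    cases q with
    | nil => simp_all
    | @cons b d w h' q =>
      have hbw : b ≠ w := by rintro rfl; simp at hq
      have hturn : s(u, b) ∈ S ↔ s(b, d) ∈ S := by
        have := hS b (by simp) h.ne' hbw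
        exact ⟨this _ (by simp) _ (by simp) (by simp) (by simp),
          this _ (by simp) _ (by simp) (by simp) (by simp)⟩
      have htail : ∀ f ∈ (cons h' q).edges, f ∈ S := by
        rw [edges_cons, List.mem_cons] at he
        rcases he with rfl | he
        · exact ih hq.1 hS' (by simp) (hturn.mp heS)
        · exact ih hq.1 hS' he heS
      intro f hf
      rw [edges_cons, List.mem_cons] at hf
      rcases hf with rfl | hf
      · exact hturn.mpr (htail _ (by simp))
      · exact htail f hf

lemma IsPath.snd_eq_of_mem_edges {u w y : V} {q : G.Walk u w} (hq : q.IsPath)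
    (h : s(u, y) ∈ q.edges) : q.snd = y :=
  hq.snd_of_toSubgraph_adj (adj_toSubgraph_iff_mem_edges.mpr h)

end Walk

namespace IsWatermelon

variable {v₁ v₂ : V} {k : ℕ} {p : Fin k → G.Walk v₁ v₂}

lemma eq_of_mem_edges (hW : G.IsWatermelon v₁ v₂ p) {i j : Fin k} {e : Sym2 V}
    (hi : e ∈ (p i).edges) (hj : e ∈ (p j).edges) : i = j := by
  by_contra hij
  induction e using Sym2.ind with | _ x y
  have hinter := hW.support_inter i j hij
  have hx : x ∈ ({v₁, v₂} : Set V) := hinter ▸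
    ⟨(p i).fst_mem_support_of_mem_edges hi, (p j).fst_mem_support_of_mem_edges hj⟩
  have hy : y ∈ ({v₁, v₂} : Set V) := hinter ▸
    ⟨(p i).snd_mem_support_of_mem_edges hi, (p j).snd_mem_support_of_mem_edges hj⟩
  have hxy : x ≠ y := ((p i).adj_of_mem_edges hi).ne
  have hlen := hW.two_le_length i
  have hshort := (hW.isPath i).length_eq_one_of_mem_edges
  rcases hx with rfl | rfl <;> rcases hy with rfl | rfl
  · exact hxy rfl
  · have := hshort hi; omega
  · have := hshort (Sym2.eq_swap ▸ hi); omega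
  · exact hxy rfl

lemma neighborSet_subset (hW : G.IsWatermelon v₁ v₂ p) {i : Fin k} {x : V}
    (hx : x ∈ (p i).support) (hx₁ : x ≠ v₁) (hx₂ : x ≠ v₂) :
    G.neighborSet x ⊆ (p i).toSubgraph.neighborSet x := by
  intro y hxy
  obtain ⟨j, hj⟩ := hW.edge_cover s(x, y) hxy
  obtain rfl : i = j := by
    by_contra hij
    have : x ∈ ({v₁, v₂} : Set V) :=
      hW.support_inter i j hij ▸ ⟨hx, (p j).fst_mem_support_of_mem_edges hj⟩
    rcases this with rfl | rfl <;> contradiction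
  exact Walk.adj_toSubgraph_iff_mem_edges.mpr hj

lemma encard_neighborSet_le_two (hW : G.IsWatermelon v₁ v₂ p) {i : Fin k} {x : V}
    (hx : x ∈ (p i).support) (hx₁ : x ≠ v₁) (hx₂ : x ≠ v₂) :
    (G.neighborSet x).encard ≤ 2 := by
  calc (G.neighborSet x).encard
      ≤ ((p i).toSubgraph.neighborSet x).encard :=
        Set.encard_le_encard (hW.neighborSet_subset hx hx₁ hx₂)
    _ = 2 := by
      rw [← (p i).finite_neighborSet_toSubgraph.cast_ncard_eq,
        (hW.isPath i).ncard_neighborSet_toSubgraph_eq_two hx hx₁ hx₂]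
      rfl

lemma forall_mem_edges_of_mem (hW : G.IsWatermelon v₁ v₂ p) {a : V} {c : G.Walk a a}
    (hc : c.IsCycle) {i : Fin k} {e : Sym2 V} (hei : e ∈ (p i).edges) (hec : e ∈ c.edges) :
    ∀ f ∈ (p i).edges, f ∈ c.edges := by
  refine (hW.isPath i).forall_mem_edges_of_mem (S := {e | e ∈ c.edges}) ?_ hei hec
  intro x hx hx₁ hx₂ e _ f hf hxe hxf hec
  have hxc : x ∈ c.support := by
    obtain ⟨y, rfl⟩ := Sym2.mem_iff_exists.mp hxe
    exact c.fst_mem_support_of_mem_edges hec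
  obtain ⟨y, rfl⟩ := Sym2.mem_iff_exists.mp hxf
  have hxy : y ∈ c.toSubgraph.neighborSet x := by
    rw [hc.neighborSet_toSubgraph_eq_of_encard_le_two hxc
      (hW.encard_neighborSet_le_two hx hx₁ hx₂)]
    exact (p i).adj_of_mem_edges hf
  exact Walk.adj_toSubgraph_iff_mem_edges.mp hxy

lemma start_snd_mem_edges (hW : G.IsWatermelon v₁ v₂ p) (i : Fin k) :
    s(v₁, (p i).snd) ∈ (p i).edges := by
  refine Walk.adj_toSubgraph_iff_mem_edges.mp ((p i).toSubgraph_adj_snd ?_)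
  rw [← Walk.length_eq_zero_iff]
  have := hW.two_le_length i
  omega

lemma start_mem_support_of_isCycle (hW : G.IsWatermelon v₁ v₂ p) {a : V} {c : G.Walk a a}
    (hc : c.IsCycle) : v₁ ∈ c.support := by
  obtain ⟨e, he⟩ := List.exists_mem_of_ne_nil _ (Walk.edges_eq_nil.not.mpr hc.not_nil)
  obtain ⟨m, hm⟩ := hW.edge_cover e (c.edges_subset_edgeSet he)
  exact c.fst_mem_support_of_mem_edges
    (hW.forall_mem_edges_of_mem hc hm he _ (hW.start_snd_mem_edges m))

end IsWatermelon

end SimpleGraph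

open SimpleGraph

theorem watermelon_cycle_is_two_paths {V : Type*}
    (G : SimpleGraph V) (v₁ v₂ : V) {k : ℕ} (p : Fin k → G.Walk v₁ v₂)
    (hW : G.IsWatermelon v₁ v₂ p) :
    ∀ (a : V) (c : G.Walk a a), c.IsCycle →
      ∃ i j, i ≠ j ∧
        {e | e ∈ c.edges} = {e | e ∈ (p i).edges} ∪ {e | e ∈ (p j).edges} := by
  intro a c hc
  have hcover : ∀ e ∈ c.edges, ∃ m, e ∈ (p m).edges := fun e he ↦
    hW.edge_cover e (c.edges_subset_edgeSet he)
  obtain ⟨y₁, y₂, hy, hN⟩ := Set.ncard_eq_two.mp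
    (hc.ncard_neighborSet_toSubgraph_eq_two (hW.start_mem_support_of_isCycle hc))
  have hc₁ : ∀ y, s(v₁, y) ∈ c.edges ↔ y = y₁ ∨ y = y₂ := fun y ↦ by
    rw [← Walk.adj_toSubgraph_iff_mem_edges, ← Subgraph.mem_neighborSet, hN]
    rfl
  have hy₁ : s(v₁, y₁) ∈ c.edges := (hc₁ y₁).mpr (.inl rfl)
  have hy₂ : s(v₁, y₂) ∈ c.edges := (hc₁ y₂).mpr (.inr rfl)
  obtain ⟨i, hi⟩ := hcover _ hy₁
  obtain ⟨j, hj⟩ := hcover _ hy₂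
  refine ⟨i, j, fun hij ↦ hy ?_, ?_⟩
  · subst hij
    rw [← (hW.isPath i).snd_eq_of_mem_edges hi, (hW.isPath i).snd_eq_of_mem_edges hj]
  ext e
  refine ⟨fun he ↦ ?_, ?_⟩
  · obtain ⟨m, hm⟩ := hcover e he
    have hm₁ := hW.start_snd_mem_edges m
    rcases (hc₁ _).mp (hW.forall_mem_edges_of_mem hc hm he _ hm₁) with h | h
    · exact .inl (hW.eq_of_mem_edges (h ▸ hm₁) hi ▸ hm)
    · exact .inr (hW.eq_of_mem_edges (h ▸ hm₁) hj ▸ hm)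
  · rintro (he | he)
    · exact hW.forall_mem_edges_of_mem hc hi hy₁ e he
    · exact hW.forall_mem_edges_of_mem hc hj hy₂ e he
end
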